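/- arXiv:2306.01131 — 4 statements merged into one kernel-verified Lean document; each statement's English description precedes it below -/
import Mathlib

section
/- In an SP-structure, if A is a subspace then A ⊕ A^⊥ = Ω and A ∩ A^⊥ = ∅, where A ⊕ B denotes the smallest subspace containing A ∪ B. -/
variable {Ω : Type*}

/-- A set of pairwise orthogonal points. -/
def OrthoSet (s : Ω → Ω → ℝ) (A : Set Ω) : Prop :=
  ∀ x ∈ A, ∀ y ∈ A, x ≠ y → s x y = 0

/-- The subspace generated by an ortho-set `A`: the points whose total
similarity to `A` equals `1`. -/
def SpanOf (s : Ω → Ω → ℝ) (A : Set Ω) : Set Ω :=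
  {x : Ω | (∑' y : A, s x (y : Ω)) = 1}

/-- A subspace is a set of the form `SpanOf s A` for an ortho-set `A` (a basis). -/
def IsSubspace (s : Ω → Ω → ℝ) (B : Set Ω) : Prop :=
  ∃ A : Set Ω, OrthoSet s A ∧ B = SpanOf s A

/-- Orthogonal complement of a subset. -/
def Perp (s : Ω → Ω → ℝ) (A : Set Ω) : Set Ω :=
  {x : Ω | ∀ y ∈ A, s x y = 0}

/-- The sum of two subsets: the smallest subspace including their union. -/
def Oplus (s : Ω → Ω → ℝ) (A B : Set Ω) : Set Ω :=
  ⋂₀ {X : Set Ω | IsSubspace s X ∧ A ∪ B ⊆ X}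

/-!
Write the subspace as `A = SpanOf s B` and extend `B` to a basis `B'` of `Ω`. Because the
similarities of a point to an ortho-set sum to at most `1`, a point of `A` (whose similarities
to `B` already sum to `1`) is orthogonal to every point of `B' \ B`; hence `B' ⊆ A ∪ A^⊥`.
The sum `A ⊕ A^⊥` is a subspace containing the basis `B'`, so its orthogonal complement is
empty, and a subspace with empty complement is `Ω`: the extension of its basis to a basis of `Ω`
cannot add any point.
-/

section

variable {s : Ω → Ω → ℝ}

theorem OrthoSet.mono {A B : Set Ω} (hB : OrthoSet s B) (hAB : A ⊆ B) : OrthoSet s A :=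
  fun x hx y hy => hB x (hAB hx) y (hAB hy)

theorem OrthoSet.subset_spanOf (hdiag : ∀ x, s x x = 1) {A : Set Ω} (hA : OrthoSet s A) :
    A ⊆ SpanOf s A := by
  intro a ha
  show ∑' y : A, s a y = 1
  rw [tsum_eq_single (f := fun y : A => s a y) ⟨a, ha⟩
    fun y hy => hA a ha y y.2 fun h => hy (Subtype.ext h.symm), hdiag]

theorem inter_perp_eq_empty (hdiag : ∀ x, s x x = 1) (A : Set Ω) : A ∩ Perp s A = ∅ :=
  Set.eq_empty_of_forall_notMem fun x ⟨hxA, hxA'⟩ => by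
    simpa [hdiag] using hxA' x hxA

theorem perp_anti {A B : Set Ω} (hAB : A ⊆ B) : Perp s B ⊆ Perp s A :=
  fun _ hx y hy => hx y (hAB hy)

theorem perp_eq_empty_of_spanOf_eq_univ {B : Set Ω} (hB : SpanOf s B = Set.univ) :
    Perp s B = ∅ := by
  refine Set.eq_empty_of_forall_notMem fun x hx => ?_
  have hspan : ∑' y : B, s x y = 1 := (hB.symm ▸ Set.mem_univ x : x ∈ SpanOf s B)
  rw [tsum_congr fun y : B => hx y y.2, tsum_zero] at hspan
  exact zero_ne_one hspan

theorem apply_eq_zero_of_mem_spanOf (hnonneg : ∀ x y, 0 ≤ s x y)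
    (hbound : ∀ (x : Ω) (A : Set Ω), OrthoSet s A → (∑' y : A, s x (y : Ω)) ≤ 1)
    {A : Set Ω} {x y : Ω} (hA : OrthoSet s (insert x A)) (hx : x ∉ A) (hy : y ∈ SpanOf s A) :
    s y x = 0 := by
  have hy' : ∑' z : A, s y z = 1 := hy
  have hsum : Summable fun z : A => s y z := by
    by_contra h
    rw [tsum_eq_zero_of_not_summable h] at hy'
    exact zero_ne_one hy'
  have hinsert : ∑' z : (insert x A : Set Ω), s y z = s y x + 1 := by
    rw [← Set.singleton_union, Summable.tsum_union_disjoint (f := s y)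
      (Set.disjoint_singleton_left.2 hx) (Summable.of_finite) hsum, tsum_singleton, hy']
  linarith [hbound y _ hA, hnonneg y x]

theorem OrthoSet.diff_subset_perp_spanOf (hnonneg : ∀ x y, 0 ≤ s x y)
    (hsym : ∀ x y, s x y = s y x)
    (hbound : ∀ (x : Ω) (A : Set Ω), OrthoSet s A → (∑' y : A, s x (y : Ω)) ≤ 1)
    {A B : Set Ω} (hB : OrthoSet s B) (hAB : A ⊆ B) :
    B \ A ⊆ Perp s (SpanOf s A) := fun x ⟨hxB, hxA⟩ y hy => by
  rw [hsym]
  exact apply_eq_zero_of_mem_spanOf hnonneg hbound (hB.mono (Set.insert_subset hxB hAB)) hxA hy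

theorem IsSubspace.eq_univ_of_perp_eq_empty (hnonneg : ∀ x y, 0 ≤ s x y)
    (hsym : ∀ x y, s x y = s y x)
    (hbound : ∀ (x : Ω) (A : Set Ω), OrthoSet s A → (∑' y : A, s x (y : Ω)) ≤ 1)
    (hext : ∀ B : Set Ω, OrthoSet s B →
      ∃ B' : Set Ω, B ⊆ B' ∧ OrthoSet s B' ∧ SpanOf s B' = Set.univ)
    {A : Set Ω} (hA : IsSubspace s A) (hperp : Perp s A = ∅) : A = Set.univ := by
  obtain ⟨B, hB, rfl⟩ := hA
  obtain ⟨B', hBB', hB', hB'univ⟩ := hext B hB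
  have hB'B : B' ⊆ B := by
    simpa [hperp, Set.sdiff_eq_empty] using hB'.diff_subset_perp_spanOf hnonneg hsym hbound hBB'
  rwa [hB'B.antisymm hBB'] at hB'univ

theorem subset_oplus (A B : Set Ω) : A ∪ B ⊆ Oplus s A B :=
  Set.subset_sInter fun _ hX => hX.2

theorem isSubspace_oplus
    (hinter : ∀ 𝒜 : Set (Set Ω), (∀ X ∈ 𝒜, IsSubspace s X) → IsSubspace s (⋂₀ 𝒜))
    (A B : Set Ω) : IsSubspace s (Oplus s A B) :=
  hinter _ fun _ hX => hX.1

end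

theorem oplus_perp_eq_univ_and_inter_perp_eq_empty_general
    (s : Ω → Ω → ℝ)
    (hval : ∀ x y : Ω, s x y ∈ Set.Icc (0 : ℝ) 1)
    (heq : ∀ x y : Ω, s x y = 1 ↔ x = y)
    (hsym : ∀ x y : Ω, s x y = s y x)
    (hbound : ∀ (x : Ω) (A : Set Ω), OrthoSet s A → (∑' y : A, s x (y : Ω)) ≤ 1)
    (hinter : ∀ 𝒜 : Set (Set Ω), (∀ X ∈ 𝒜, IsSubspace s X) → IsSubspace s (⋂₀ 𝒜))
    (hext : ∀ B : Set Ω, OrthoSet s B →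
      ∃ B' : Set Ω, B ⊆ B' ∧ OrthoSet s B' ∧ SpanOf s B' = Set.univ) :
    ∀ A : Set Ω, IsSubspace s A →
      Oplus s A (Perp s A) = Set.univ ∧ A ∩ Perp s A = ∅ := by
  intro A hA
  have hdiag : ∀ x, s x x = 1 := fun x => (heq x x).2 rfl
  have hnonneg : ∀ x y, 0 ≤ s x y := fun x y => (hval x y).1
  refine ⟨?_, inter_perp_eq_empty hdiag A⟩
  obtain ⟨B, hB, rfl⟩ := hA
  obtain ⟨B', hBB', hB', hB'univ⟩ := hext B hB
  have hB'oplus : B' ⊆ Oplus s (SpanOf s B) (Perp s (SpanOf s B)) :=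
    (Set.sdiff_subset_iff.1 (hB'.diff_subset_perp_spanOf hnonneg hsym hbound hBB')).trans <|
      (Set.union_subset_union_left _ (hB.subset_spanOf hdiag)).trans (subset_oplus _ _)
  refine (isSubspace_oplus hinter _ _).eq_univ_of_perp_eq_empty hnonneg hsym hbound hext ?_
  exact Set.subset_empty_iff.1 <| perp_eq_empty_of_spanOf_eq_univ hB'univ ▸ perp_anti hB'oplus

theorem oplus_perp_eq_univ_and_inter_perp_eq_empty
    (s : Ω → Ω → ℝ)
    (hval : ∀ x y : Ω, s x y ∈ Set.Icc (0 : ℝ) 1)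
    (heq : ∀ x y : Ω, s x y = 1 ↔ x = y)
    (hsym : ∀ x y : Ω, s x y = s y x)
    (hbound : ∀ (x : Ω) (A : Set Ω), OrthoSet s A → (∑' y : A, s x (y : Ω)) ≤ 1)
    (hinter : ∀ 𝒜 : Set (Set Ω), (∀ X ∈ 𝒜, IsSubspace s X) → IsSubspace s (⋂₀ 𝒜))
    (huniv : IsSubspace s (Set.univ : Set Ω))
    (hempty : IsSubspace s (∅ : Set Ω))
    (hext : ∀ B : Set Ω, OrthoSet s B →
      ∃ B' : Set Ω, B ⊆ B' ∧ OrthoSet s B' ∧ SpanOf s B' = Set.univ) :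
    ∀ A : Set Ω, IsSubspace s A →
      Oplus s A (Perp s A) = Set.univ ∧ A ∩ Perp s A = ∅ :=
  oplus_perp_eq_univ_and_inter_perp_eq_empty_general s hval heq hsym hbound hinter hext
end

section
/- For singletons in an SP-structure, the generalized similarity of subspaces satisfies s({x}, {y}) = s(x, y) for all points x, y ∈ Ω. -/
variable {Ω : Type*}

open scoped Classical

/-- `x` is orthogonal to the set `A`. -/
def PerpPt (s : Ω → Ω → ℝ) (x : Ω) (A : Set Ω) : Prop :=
  ∀ y ∈ A, s x y = 0

/-- Similarity of the subspaces `A` and `B` from the vantage point `x`,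
given the projection map `t` and the point-to-subspace similarity `sP`. -/
noncomputable def tauSim (s : Ω → Ω → ℝ) (t : Ω → Set Ω → Ω) (sP : Ω → Set Ω → ℝ)
    (x : Ω) (A B : Set Ω) : ℝ :=
  if PerpPt s x A then 1 - sP x B
  else if PerpPt s x B then 1 - sP x A
  else s (t x A) (t x B)

/-- Similarity of two subspaces: the infimum over all vantage points. -/
noncomputable def simSub (s : Ω → Ω → ℝ) (t : Ω → Set Ω → Ω) (sP : Ω → Set Ω → ℝ)
    (A B : Set Ω) : ℝ :=
  sInf (Set.range fun x : Ω => tauSim s t sP x A B)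

/-- For singletons, the subspace similarity coincides with the point similarity. -/
theorem simSub_singleton
    (s : Ω → Ω → ℝ) (t : Ω → Set Ω → Ω) (sP : Ω → Set Ω → ℝ)
    (hval : ∀ x y : Ω, s x y ∈ Set.Icc (0 : ℝ) 1)
    (heq : ∀ x y : Ω, s x y = 1 ↔ x = y)
    (hsym : ∀ x y : Ω, s x y = s y x)
    (ht_single : ∀ x y : Ω, ¬ PerpPt s x {y} → t x {y} = y)
    (hsP_single : ∀ x y : Ω, sP x {y} = s x y)
    (hbound2 : ∀ x y z : Ω, s y z = 0 → s x y + s x z ≤ 1) :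
    ∀ x y : Ω, simSub s t sP {x} {y} = s x y := by
  intro x y
  have hperp : ∀ v w : Ω, PerpPt s v {w} ↔ s v w = 0 := by
    intro v w
    constructor
    · intro h; exact h w rfl
    · intro h z hz; rw [Set.mem_singleton_iff] at hz; subst hz; exact h
  -- lower bound
  have hlb : ∀ v : Ω, s x y ≤ tauSim s t sP v {x} {y} := by
    intro v
    unfold tauSim
    by_cases h1 : PerpPt s v {x}
    · rw [if_pos h1, hsP_single]
      have h0 : s v x = 0 := (hperp v x).1 h1
      have := hbound2 y v x h0
      have hsy : s y v = s v y := hsym y v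
      have hxy : s y x = s x y := hsym y x
      linarith
    · rw [if_neg h1]
      by_cases h2 : PerpPt s v {y}
      · rw [if_pos h2, hsP_single]
        have h0 : s v y = 0 := (hperp v y).1 h2
        have := hbound2 x v y h0
        have hsx : s x v = s v x := hsym x v
        linarith
      · rw [if_neg h2, ht_single v x h1, ht_single v y h2]
  -- attained at v = x
  have hx : ¬ PerpPt s x {x} := by
    rw [hperp]
    rw [(heq x x).2 rfl]; norm_num
  have hmem : tauSim s t sP x {x} {y} = s x y := by
    unfold tauSim
    rw [if_neg hx]
    by_cases h2 : PerpPt s x {y}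
    · rw [if_pos h2, hsP_single, (heq x x).2 rfl, (hperp x y).1 h2]; ring
    · rw [if_neg h2, ht_single x x hx, ht_single x y h2]
  refine le_antisymm ?_ ?_
  · rw [simSub]
    exact csInf_le ⟨s x y, fun r ⟨v, hv⟩ => hv ▸ hlb v⟩ ⟨x, hmem⟩
  · exact le_csInf ⟨_, ⟨x, rfl⟩⟩ (fun r ⟨v, hv⟩ => hv ▸ hlb v)
end

section
/- In an SP-structure, the subspace similarity s(A, B) equals 1 if and only if the subspaces A and B are equal. -/
variable {Ω : Type*}

open scoped Classical

/-- The subspace similarity equals `1` iff the two subspaces are equal. -/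
theorem simSub_eq_one_iff [Nonempty Ω]
    (s : Ω → Ω → ℝ) (t : Ω → Set Ω → Ω) (sP : Ω → Set Ω → ℝ)
    (hval : ∀ x y : Ω, s x y ∈ Set.Icc (0 : ℝ) 1)
    (heq : ∀ x y : Ω, s x y = 1 ↔ x = y)
    (hsym : ∀ x y : Ω, s x y = s y x)
    (hsPval : ∀ (x : Ω) (A : Set Ω), sP x A ∈ Set.Icc (0 : ℝ) 1)
    (ht_mem : ∀ (x : Ω) (A : Set Ω), IsSubspace s A → ¬ PerpPt s x A → t x A ∈ A)
    (hsP_nonperp : ∀ (x : Ω) (A : Set Ω), IsSubspace s A → ¬ PerpPt s x A →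
      sP x A = s x (t x A))
    (hsP_perp : ∀ (x : Ω) (A : Set Ω), IsSubspace s A → PerpPt s x A → sP x A = 0)
    (hfact : ∀ (x : Ω) (A : Set Ω), IsSubspace s A → ¬ PerpPt s x A →
      ∀ y ∈ A, s x y = s x (t x A) * s (t x A) y) :
    ∀ A B : Set Ω, IsSubspace s A → IsSubspace s B →
      (simSub s t sP A B = 1 ↔ A = B) := by
  
  intro A B hA hB
  have htau_mem : ∀ x, tauSim s t sP x A B ∈ Set.Icc (0:ℝ) 1 := by
    intro x
    unfold tauSim
    split_ifs
    · exact ⟨by linarith [(hsPval x B).2], by linarith [(hsPval x B).1]⟩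
    · exact ⟨by linarith [(hsPval x A).2], by linarith [(hsPval x A).1]⟩
    · exact hval _ _
  have hbdd : BddBelow (Set.range fun x : Ω => tauSim s t sP x A B) := by
    refine ⟨0, ?_⟩
    rintro _ ⟨x, rfl⟩
    exact (htau_mem x).1
  have hne : (Set.range fun x : Ω => tauSim s t sP x A B).Nonempty :=
    Set.range_nonempty _
  have key : ∀ (C : Set Ω) (a : Ω), IsSubspace s C → a ∈ C →
      ¬ PerpPt s a C ∧ t a C = a := by
    intro C a hC ha
    have h1 : s a a = 1 := (heq a a).mpr rfl
    have hnp : ¬ PerpPt s a C := by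
      intro hp
      have := hp a ha
      linarith
    refine ⟨hnp, ?_⟩
    have hf := hfact a C hC hnp a ha
    have h2 := hval a (t a C)
    have h3 := hval (t a C) a
    have hone : s (t a C) a = 1 := by nlinarith [h2.1, h2.2, h3.1, h3.2]
    exact (heq _ _).mp hone
  constructor
  · intro h1
    have hall : ∀ x, tauSim s t sP x A B = 1 := by
      intro x
      have hle := csInf_le hbdd (Set.mem_range_self (f := fun x : Ω => tauSim s t sP x A B) x)
      rw [show sInf (Set.range fun x : Ω => tauSim s t sP x A B) = simSub s t sP A B from rfl, h1] at hle
      linarith [(htau_mem x).2]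
    apply Set.Subset.antisymm
    · intro a ha
      obtain ⟨hnpA, htA⟩ := key A a hA ha
      have hx := hall a
      have h1a : s a a = 1 := (heq a a).mpr rfl
      have hnpB : ¬ PerpPt s a B := by
        intro hpB
        rw [tauSim, if_neg hnpA, if_pos hpB] at hx
        have hsp : sP a A = s a (t a A) := hsP_nonperp a A hA hnpA
        rw [htA] at hsp
        linarith
      rw [tauSim, if_neg hnpA, if_neg hnpB] at hx
      have heq2 : t a A = t a B := (heq _ _).mp hx
      rw [htA] at heq2
      rw [heq2]
      exact ht_mem a B hB hnpB
    · intro b hb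
      obtain ⟨hnpB, htB⟩ := key B b hB hb
      have hx := hall b
      have h1b : s b b = 1 := (heq b b).mpr rfl
      have hnpA : ¬ PerpPt s b A := by
        intro hpA
        rw [tauSim, if_pos hpA] at hx
        have hsp : sP b B = s b (t b B) := hsP_nonperp b B hB hnpB
        rw [htB] at hsp
        linarith
      rw [tauSim, if_neg hnpA, if_neg hnpB] at hx
      have heq2 : t b A = t b B := (heq _ _).mp hx
      rw [htB] at heq2
      rw [← heq2]
      exact ht_mem b A hA hnpA
  · rintro rfl
    have hall : ∀ x, tauSim s t sP x A A = 1 := by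
      intro x
      unfold tauSim
      split_ifs with hp
      · rw [hsP_perp x A hA hp]; ring
      · exact (heq _ _).mpr rfl
    obtain ⟨x₀⟩ := ‹Nonempty Ω›
    apply le_antisymm
    · calc simSub s t sP A A ≤ tauSim s t sP x₀ A A := csInf_le hbdd ⟨x₀, rfl⟩
        _ = 1 := hall x₀
    · apply le_csInf hne
      rintro _ ⟨x, rfl⟩
      exact (hall x).ge
end

section
/- For any point x in an SP-structure with σ*-field F, the function p_x(B) := s(x, B) = ∑_{y∈A} s(x,y) (for any basis A of B) is a *-probability on F; in particular p_x is well-defined (independent of the choice of basis), p_x(∅)=0, p_x(Ω)=1, p_x is countably additive over orthogonal sums, and p_x satisfies the continuity inequality p_x(A) ≤ p_x(B) + (1/2)√(1 − s(A,B)) + (1 − s(A,B)). -/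
variable {Ω : Type*}

/-- The sum of a countable family of subsets: the smallest subspace
including all of them. -/
def OplusSeq (s : Ω → Ω → ℝ) (A : ℕ → Set Ω) : Set Ω :=
  ⋂₀ {X : Set Ω | IsSubspace s X ∧ ∀ n, A n ⊆ X}

/-- Two sets are orthogonal iff every point of one is orthogonal to every
point of the other. -/
def OrthoSets (s : Ω → Ω → ℝ) (A B : Set Ω) : Prop :=
  ∀ x ∈ A, ∀ y ∈ B, s x y = 0

/-- A σ*-field over an SP-structure: a collection of subspaces containing `∅`,
closed under orthogonal complement, and closed under countable sums of
pairwise orthogonal members. -/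
def SigmaStarField (s : Ω → Ω → ℝ) (F : Set (Set Ω)) : Prop :=
  (∀ A ∈ F, IsSubspace s A) ∧
  ∅ ∈ F ∧
  (∀ A ∈ F, Perp s A ∈ F) ∧
  (∀ A : ℕ → Set Ω, (∀ n, A n ∈ F) →
    (Pairwise fun i j => OrthoSets s (A i) (A j)) → OplusSeq s A ∈ F)

open scoped Classical

/-- A *-probability on a σ*-field `F`, relative to the subspace similarity
`sim`: a `[0,∞]`-valued function with `p ∅ = 0`, `p Ω = 1`, countable
additivity over pairwise orthogonal events, and the continuity condition. -/
def IsStarProb (s : Ω → Ω → ℝ) (F : Set (Set Ω)) (sim : Set Ω → Set Ω → ℝ)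
    (p : Set Ω → ENNReal) : Prop :=
  p ∅ = 0 ∧
  p Set.univ = 1 ∧
  (∀ A : ℕ → Set Ω, (∀ n, A n ∈ F) →
    (Pairwise fun i j => OrthoSets s (A i) (A j)) →
    p (OplusSeq s A) = ∑' n, p (A n)) ∧
  (∀ A ∈ F, ∀ B ∈ F,
    p A ≤ p B + ENNReal.ofReal
      (1 / 2 * Real.sqrt (1 - sim A B) + (1 - sim A B)))

section PureStateHelpers

variable {Ω : Type*}

lemma ortho_summable (s : Ω → Ω → ℝ)
    (hval : ∀ x y : Ω, s x y ∈ Set.Icc (0:ℝ) 1)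
    (hbound : ∀ (x : Ω) (A : Set Ω), OrthoSet s A → (∑' y : A, s x (y : Ω)) ≤ 1)
    (x : Ω) {A : Set Ω} (hA : OrthoSet s A) :
    Summable (fun y : A => s x (y : Ω)) := by
  apply summable_of_sum_le (c := 1)
  · intro y; exact (hval x y).1
  · intro u
    have hsub : (↑(u.image (Subtype.val)) : Set Ω) ⊆ A := by
      intro z hz
      simp only [Finset.coe_image] at hz
      obtain ⟨y, -, rfl⟩ := hz
      exact y.2
    have hOrtho : OrthoSet s (↑(u.image (Subtype.val)) : Set Ω) :=
      fun a ha b hb hab => hA a (hsub ha) b (hsub hb) hab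
    have h1 := hbound x _ hOrtho
    rwa [Finset.tsum_subtype' (u.image Subtype.val) (fun y => s x y),
      Finset.sum_image (fun a _ b _ h => Subtype.val_injective h)] at h1

lemma mem_span_self (s : Ω → Ω → ℝ) (heq : ∀ x y : Ω, s x y = 1 ↔ x = y)
    {A : Set Ω} (hA : OrthoSet s A) {a : Ω} (ha : a ∈ A) : a ∈ SpanOf s A := by
  show (∑' y : A, s a (y : Ω)) = 1
  rw [tsum_eq_single (⟨a, ha⟩ : A)]
  · exact (heq a a).2 rfl
  · intro b hb
    exact hA a ha (b : Ω) b.2 (fun h => hb (Subtype.ext h.symm))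

end PureStateHelpers

/-- For any point `x`, the map `B ↦ s(x,B)` (the sum of `s x ·` over any basis
of `B`) is well defined and is a *-probability: a pure state. -/
theorem pure_state_is_starProb [Nonempty Ω]
    (s : Ω → Ω → ℝ) (t : Ω → Set Ω → Ω) (sP : Ω → Set Ω → ℝ)
    (F : Set (Set Ω)) (hF : SigmaStarField s F)
    (hval : ∀ x y : Ω, s x y ∈ Set.Icc (0 : ℝ) 1)
    (heq : ∀ x y : Ω, s x y = 1 ↔ x = y)
    (hsym : ∀ x y : Ω, s x y = s y x)
    (hbound : ∀ (x : Ω) (A : Set Ω), OrthoSet s A → (∑' y : A, s x (y : Ω)) ≤ 1)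
    (hcont : ∀ x y z : Ω,
      s z x ≤ s z y + 1 / 2 * Real.sqrt (1 - s x y) + (1 - s x y))
    (ht_mem : ∀ (x : Ω) (A : Set Ω), IsSubspace s A → ¬ PerpPt s x A → t x A ∈ A)
    (hsP_nonperp : ∀ (x : Ω) (A : Set Ω), IsSubspace s A → ¬ PerpPt s x A →
      sP x A = s x (t x A))
    (hfact : ∀ (x : Ω) (A : Set Ω), IsSubspace s A → ¬ PerpPt s x A →
      ∀ y ∈ A, s x y = s x (t x A) * s (t x A) y)
    (hsP_basis : ∀ (x : Ω) (B A : Set Ω), OrthoSet s A → B = SpanOf s A →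
      sP x B = ∑' y : A, s x (y : Ω))
    (hbasis_sum : ∀ A : ℕ → Set Ω, (∀ n, IsSubspace s (A n)) →
      (Pairwise fun i j => OrthoSets s (A i) (A j)) →
      ∀ B : ℕ → Set Ω, (∀ n, OrthoSet s (B n)) → (∀ n, A n = SpanOf s (B n)) →
        OplusSeq s A = SpanOf s (⋃ n, B n)) :
    ∀ x : Ω,
      (∀ B A A' : Set Ω, OrthoSet s A → OrthoSet s A' →
        B = SpanOf s A → B = SpanOf s A' →
        (∑' y : A, s x (y : Ω)) = ∑' y : A', s x (y : Ω)) ∧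
      IsStarProb s F (simSub s t sP) (fun B => ENNReal.ofReal (sP x B)) := by
  intro x
  have hWD : ∀ B A A' : Set Ω, OrthoSet s A → OrthoSet s A' →
      B = SpanOf s A → B = SpanOf s A' →
      (∑' y : A, s x (y : Ω)) = ∑' y : A', s x (y : Ω) := by
    intro B A A' hA hA' hBA hBA'
    rw [← hsP_basis x B A hA hBA, hsP_basis x B A' hA' hBA']
  -- sP is nonneg and ≤ 1 on subspaces
  have hsP_nonneg : ∀ z : Ω, ∀ C : Set Ω, IsSubspace s C → 0 ≤ sP z C := by
    intro z C hC
    obtain ⟨A0, hA0, hspan⟩ := hC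
    rw [hsP_basis z C A0 hA0 hspan]
    exact tsum_nonneg (fun y => (hval z y).1)
  have hsP_le_one : ∀ z : Ω, ∀ C : Set Ω, IsSubspace s C → sP z C ≤ 1 := by
    intro z C hC
    obtain ⟨A0, hA0, hspan⟩ := hC
    rw [hsP_basis z C A0 hA0 hspan]
    exact hbound z A0 hA0
  refine ⟨hWD, ?_, ?_, ?_, ?_⟩
  · -- p ∅ = 0
    obtain ⟨A0, hA0, hspan⟩ := hF.1 ∅ hF.2.1
    have hA0empty : A0 = ∅ := by
      by_contra h
      obtain ⟨a, ha⟩ := Set.nonempty_iff_ne_empty.2 h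
      have := mem_span_self s heq hA0 ha
      rw [← hspan] at this
      exact this
    have h0 : sP x ∅ = 0 := by
      rw [hsP_basis x ∅ A0 hA0 hspan, hA0empty]
      exact tsum_empty
    simp [h0]
  · -- p univ = 1
    have huniv : Perp s (∅ : Set Ω) = Set.univ := by
      ext z; simp [Perp]
    have hunivF : Set.univ ∈ F := by
      rw [← huniv]; exact hF.2.2.1 ∅ hF.2.1
    obtain ⟨A0, hA0, hspan⟩ := hF.1 _ hunivF
    have hx : x ∈ SpanOf s A0 := by rw [← hspan]; trivial
    have h1 : sP x Set.univ = 1 := by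
      rw [hsP_basis x _ A0 hA0 hspan]; exact hx
    simp [h1]
  · -- countable additivity
    intro A hA hortho
    have hsub : ∀ n, IsSubspace s (A n) := fun n => hF.1 _ (hA n)
    choose B hBortho hBspan using hsub
    have hBsub : ∀ n, B n ⊆ A n := fun n y hy => by
      rw [hBspan n]; exact mem_span_self s heq (hBortho n) hy
    have hBdisj : Pairwise (Function.onFun Disjoint B) := by
      intro i j hij
      rw [Function.onFun, Set.disjoint_left]
      intro b hbi hbj
      have h0 := hortho hij b (hBsub i hbi) b (hBsub j hbj)
      have h1 := (heq b b).2 rfl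
      linarith
    have hUortho : OrthoSet s (⋃ n, B n) := by
      intro a ha b hb hab
      obtain ⟨i, hi⟩ := Set.mem_iUnion.1 ha
      obtain ⟨j, hj⟩ := Set.mem_iUnion.1 hb
      rcases eq_or_ne i j with rfl | hij
      · exact hBortho i a hi b hj hab
      · exact hortho hij a (hBsub i hi) b (hBsub j hj)
    have hsubs : ∀ n, IsSubspace s (A n) := fun n => ⟨B n, hBortho n, hBspan n⟩
    have hspanU : OplusSeq s A = SpanOf s (⋃ n, B n) :=
      hbasis_sum A hsubs hortho B hBortho hBspan
    show ENNReal.ofReal (sP x (OplusSeq s A)) = ∑' n, ENNReal.ofReal (sP x (A n))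
    rw [hsP_basis x _ _ hUortho hspanU,
      ENNReal.ofReal_tsum_of_nonneg (f := fun y : (⋃ n, B n) => s x (y : Ω))
        (fun y => (hval x _).1) (ortho_summable s hval hbound x hUortho)]
    have h1 : (∑' y : (⋃ n, B n), ENNReal.ofReal (s x (y : Ω))) =
        ∑' p : (Σ n, B n), ENNReal.ofReal (s x ((p.2 : Ω))) := by
      rw [← Equiv.tsum_eq (Set.unionEqSigmaOfDisjoint hBdisj).symm
        (fun y : (⋃ n, B n) => ENNReal.ofReal (s x (y : Ω)))]
      apply tsum_congr
      rintro ⟨n, y⟩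
      rfl
    rw [h1, ENNReal.tsum_sigma']
    apply tsum_congr
    intro n
    rw [hsP_basis x _ _ (hBortho n) (hBspan n),
      ENNReal.ofReal_tsum_of_nonneg (f := fun y : (B n) => s x (y : Ω))
        (fun y => (hval x _).1) (ortho_summable s hval hbound x (hBortho n))]
  · -- continuity
    intro A hAF B hBF
    have hAsub := hF.1 A hAF
    have hBsub := hF.1 B hBF
    -- the range of tauSim is bounded below by 0
    have htau_mem : ∀ z : Ω, tauSim s t sP z A B ∈ Set.Icc (0:ℝ) 1 := by
      intro z
      unfold tauSim
      split_ifs with h1 h2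
      · constructor
        · linarith [hsP_le_one z B hBsub]
        · linarith [hsP_nonneg z B hBsub]
      · constructor
        · linarith [hsP_le_one z A hAsub]
        · linarith [hsP_nonneg z A hAsub]
      · exact hval _ _
    have hbdd : BddBelow (Set.range fun z : Ω => tauSim s t sP z A B) := by
      refine ⟨0, ?_⟩
      rintro r ⟨z, rfl⟩
      exact (htau_mem z).1
    set σ := simSub s t sP A B with hσ
    have hσ_le : σ ≤ tauSim s t sP x A B :=
      csInf_le hbdd ⟨x, rfl⟩
    have hσ_le_one : σ ≤ 1 := hσ_le.trans (htau_mem x).2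
    -- key real inequality
    have hkey : sP x A ≤ sP x B + (1 / 2 * Real.sqrt (1 - σ) + (1 - σ)) := by
      have hmono : ∀ τ : ℝ, σ ≤ τ →
          sP x B + (1 / 2 * Real.sqrt (1 - τ) + (1 - τ)) ≤
          sP x B + (1 / 2 * Real.sqrt (1 - σ) + (1 - σ)) := by
        intro τ hτ
        have hs := Real.sqrt_le_sqrt (by linarith : (1:ℝ) - τ ≤ 1 - σ)
        nlinarith
      set τ := tauSim s t sP x A B with hτdef
      have hperp_zero : ∀ C : Set Ω, IsSubspace s C → PerpPt s x C → sP x C = 0 := by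
        intro C hC hperp
        obtain ⟨A0, hA0, hspan⟩ := hC
        rw [hsP_basis x C A0 hA0 hspan]
        have hz : ∀ y : A0, s x (y : Ω) = 0 := fun y =>
          hperp (y : Ω) (by rw [hspan]; exact mem_span_self s heq hA0 y.2)
        calc (∑' y : A0, s x (y : Ω)) = ∑' _ : A0, (0:ℝ) := tsum_congr hz
          _ = 0 := tsum_zero
      have hmain : sP x A ≤ sP x B + (1 / 2 * Real.sqrt (1 - τ) + (1 - τ)) := by
        by_cases h1 : PerpPt s x A
        · have hτ : τ = 1 - sP x B := by rw [hτdef, tauSim, if_pos h1]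
          have hA0 : sP x A = 0 := hperp_zero A hAsub h1
          rw [hA0, hτ]
          have := Real.sqrt_nonneg (1 - (1 - sP x B))
          have := hsP_nonneg x B hBsub
          linarith
        · by_cases h2 : PerpPt s x B
          · have hτ : τ = 1 - sP x A := by
              rw [hτdef, tauSim, if_neg h1, if_pos h2]
            have hB0 : sP x B = 0 := hperp_zero B hBsub h2
            rw [hB0, hτ]
            have := Real.sqrt_nonneg (1 - (1 - sP x A))
            linarith
          · have hτ : τ = s (t x A) (t x B) := by
              rw [hτdef, tauSim, if_neg h1, if_neg h2]
            rw [hτ, hsP_nonperp x A hAsub h1, hsP_nonperp x B hBsub h2]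
            have := hcont (t x A) (t x B) x
            linarith
      exact hmain.trans (hmono τ hσ_le)
    calc ENNReal.ofReal (sP x A)
        ≤ ENNReal.ofReal (sP x B + (1 / 2 * Real.sqrt (1 - σ) + (1 - σ))) :=
          ENNReal.ofReal_le_ofReal hkey
      _ ≤ ENNReal.ofReal (sP x B) +
            ENNReal.ofReal (1 / 2 * Real.sqrt (1 - σ) + (1 - σ)) :=
          ENNReal.ofReal_add_le
end
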